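/- Exact DMD modes are eigenvectors of the DMD matrix: suppose X₁ = U Σ Vᵀ is a (reduced) SVD with Σ invertible, A = X₂ V Σ⁻¹ Uᵀ, Ã = Uᵀ X₂ V Σ⁻¹, and à w = μ w with μ ≠ 0. Then Φ = X₂ V Σ⁻¹ w satisfies A Φ = μ Φ. -/
import Mathlib


open Matrix

/-- Exact DMD modes are eigenvectors of the DMD matrix `A = X₂ V Σ⁻¹ Uᵀ`. -/
theorem exact_dmd_modes_are_eigenvectors {m n r : ℕ}
    (X₁ X₂ : Matrix (Fin m) (Fin n) ℝ)
    (U : Matrix (Fin m) (Fin r) ℝ) (V : Matrix (Fin n) (Fin r) ℝ)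
    (S : Matrix (Fin r) (Fin r) ℝ)
    (hU : Uᵀ * U = 1) (hV : Vᵀ * V = 1)
    (hSdiag : S.IsDiag) (hS : IsUnit S.det)
    (hSVD : X₁ = U * S * Vᵀ)
    (w : Fin r → ℂ) (μ : ℂ) (hμ : μ ≠ 0)
    (hw : ((Uᵀ * X₂ * V * S⁻¹).map (Complex.ofReal)).mulVec w = μ • w) :
    ((X₂ * V * S⁻¹ * Uᵀ).map (Complex.ofReal)).mulVec
        (((X₂ * V * S⁻¹).map (Complex.ofReal)).mulVec w)
      = μ • (((X₂ * V * S⁻¹).map (Complex.ofReal)).mulVec w) := by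
  have h1 : ((X₂ * V * S⁻¹ * Uᵀ).map Complex.ofReal).mulVec
      (((X₂ * V * S⁻¹).map Complex.ofReal).mulVec w)
      = ((X₂ * V * S⁻¹).map Complex.ofReal).mulVec
        (((Uᵀ * X₂ * V * S⁻¹).map Complex.ofReal).mulVec w) := by
    rw [mulVec_mulVec, mulVec_mulVec,
        show (Complex.ofReal : ℝ → ℂ) = ⇑Complex.ofRealHom from rfl,
        ← Matrix.map_mul, ← Matrix.map_mul]
    congr 1
    simp [Matrix.mul_assoc]
  rw [h1, hw, mulVec_smul]
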